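/- arXiv:1802.08637 — 3 statements merged into one kernel-verified Lean document; each statement's English description precedes it below -/
import Mathlib

section
/- Weight shift is validity-preserving: Let N = (L, A) be a network model with arc-weight function w : A → ℝ^K, root r and terminal t, and let u be a node with u ≠ r and u ≠ t. Fix c ∈ ℝ^K and define a new weight function w' by w'(a) = w(a) − c for every arc a directed out of u, w'(a) = w(a) + c for every arc a directed into u, and w'(a) = w(a) for all other arcs. Then for every directed path p from r to t the total weight is unchanged, i.e. the sum of w' over the arcs of p equals the sum of w over the arcs of p; consequently the Pareto frontier satisfies P(N, w') = P(N, w). -/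
open Pointwise

/-- `y` dominates `y'`: componentwise at least as large and not equal. -/
def dominates {K : ℕ} (y y' : Fin K → ℝ) : Prop :=
  (∀ k, y' k ≤ y k) ∧ y ≠ y'

/-- The nondominated subset of `S`. -/
def ND {K : ℕ} (S : Set (Fin K → ℝ)) : Set (Fin K → ℝ) :=
  {y ∈ S | ¬ ∃ y' ∈ S, dominates y' y}

/-- `IsPath tl hd p u v`: the list of arcs `p` forms a directed walk from `u` to `v`. -/
def IsPath {V A : Type*} (tl hd : A → V) : List A → V → V → Prop
  | [], u, v => u = v
  | a :: p, u, v => tl a = u ∧ IsPath tl hd p (hd a) v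

/-- Total weight of a list of arcs. -/
def pathWeight {A : Type*} {K : ℕ} (w : A → Fin K → ℝ) (p : List A) : Fin K → ℝ :=
  (p.map w).sum

/-- A layered-acyclic network model with `n + 1` layers (indexed `1, …, n+1`),
a single root in layer `1`, a single terminal in layer `n+1`, every arc going
from one layer to the next, and `K`-dimensional arc weights. -/
structure Network (V A : Type*) (K : ℕ) where
  tl : A → V
  hd : A → V
  w : A → Fin K → ℝ
  n : ℕ
  layer : V → ℕ
  layer_pos : ∀ v, 1 ≤ layer v
  layer_le : ∀ v, layer v ≤ n + 1
  arc_step : ∀ a, layer (hd a) = layer (tl a) + 1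
  root : V
  terminal : V
  root_layer : layer root = 1
  terminal_layer : layer terminal = n + 1
  root_unique : ∀ v, layer v = 1 → v = root
  terminal_unique : ∀ v, layer v = n + 1 → v = terminal
  layer_nonempty : ∀ j, 1 ≤ j → j ≤ n + 1 → ∃ v, layer v = j

namespace Network

variable {V A : Type*} {K : ℕ}

/-- The set of directed paths from `u` to `v`. -/
def Paths (N : Network V A K) (u v : V) : Set (List A) :=
  {p | IsPath N.tl N.hd p u v}

/-- The set of weights of directed paths from `u` to `v`. -/
def weights (N : Network V A K) (u v : V) : Set (Fin K → ℝ) :=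
  pathWeight N.w '' N.Paths u v

/-- The Pareto frontier of the network. -/
def Pareto (N : Network V A K) : Set (Fin K → ℝ) :=
  ND (N.weights N.root N.terminal)

end Network

/-- **Weight shift is validity-preserving.**  Shifting a vector `c` out of the arcs
leaving a node `u` (distinct from the root and terminal) and onto the arcs entering `u`
leaves every root–terminal path weight unchanged, hence preserves the Pareto frontier. -/
theorem weight_shift_vpo {V A : Type*} [Fintype V] [Fintype A] [DecidableEq V] {K : ℕ}
    (N : Network V A K) (u : V) (hur : u ≠ N.root) (hut : u ≠ N.terminal)
    (c : Fin K → ℝ) (w' : A → Fin K → ℝ)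
    (hw' : ∀ a : A, w' a =
      if N.tl a = u then N.w a - c else if N.hd a = u then N.w a + c else N.w a) :
    (∀ p ∈ N.Paths N.root N.terminal, pathWeight w' p = pathWeight N.w p) ∧
      ND (pathWeight w' '' N.Paths N.root N.terminal) = N.Pareto := by
  have key : ∀ (p : List A) (v : V), IsPath N.tl N.hd p v N.terminal →
      pathWeight w' p = pathWeight N.w p - (if v = u then c else 0) := by
    intro p
    induction p with
    | nil =>
      intro v hv
      simp only [IsPath] at hv
      subst hv
      simp [pathWeight, if_neg (Ne.symm hut)]
    | cons a p ih =>
      intro v hv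
      obtain ⟨ha, hp⟩ := hv
      have hrest := ih (N.hd a) hp
      have hcons : ∀ (ww : A → Fin K → ℝ),
          pathWeight ww (a :: p) = ww a + pathWeight ww p := by
        intro ww; simp [pathWeight]
      have hne : N.hd a ≠ N.tl a := by
        intro h
        have := N.arc_step a
        rw [h] at this
        omega
      rw [hcons, hcons, hrest, hw' a]
      subst ha
      by_cases h1 : N.tl a = u
      · rw [if_pos h1, if_pos h1, if_neg (h1 ▸ hne)]
        abel
      · rw [if_neg h1, if_neg h1]
        by_cases h2 : N.hd a = u
        · rw [if_pos h2, if_pos h2]; abel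
        · rw [if_neg h2, if_neg h2]; abel
  have main : ∀ p ∈ N.Paths N.root N.terminal, pathWeight w' p = pathWeight N.w p := by
    intro p hp
    have := key p N.root hp
    rw [this, if_neg (Ne.symm hur)]
    abel
  refine ⟨main, ?_⟩
  have himg : pathWeight w' '' N.Paths N.root N.terminal
      = pathWeight N.w '' N.Paths N.root N.terminal := by
    apply Set.image_congr
    intro p hp
    exact main p hp
  rw [himg]
  rfl
end

section
/- Node merge is validity-preserving: Let N = (L, A) be a network model and let u_1, u_2 be two distinct nodes in the same layer such that there is a bijection φ between the set of arcs directed out of u_1 and the set of arcs directed out of u_2 satisfying: for every arc a_1 out of u_1, the arc a_2 = φ(a_1) has the same head (arc-terminal) as a_1 and the same arc weight, w(a_1) = w(a_2). Let N' be the network obtained from N by deleting all arcs directed out of u_2, redirecting every arc directed into u_2 so that its head becomes u_1, and deleting u_2. Then there is a weight-preserving one-to-one correspondence between directed r–t paths of N and directed r–t paths of N'; in particular P(N') = P(N). -/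
open Pointwise

/-!
Merging `u₂` into `u₁` acts on arcs by replacing an arc leaving `u₂` with its `φ`-partner
leaving `u₁` and fixing every other arc. This preserves heads and weights, so it sends a path
of `N` arc by arc to a path of the merged network with the same weight. Along a path the current
vertex of `N` tells whether an arc left `u₁` or `u₂`, so `φ` can be undone arc by arc: the map
is a bijection on paths that start outside `u₂` and end outside `{u₁, u₂}`. The root and the
terminal qualify, because each is alone in its layer while `u₁` and `u₂` share one.
-/

theorem Set.image_eq_image_of_equiv {α β γ : Type*} {s : Set α} {t : Set β} {f : α → γ}
    {g : β → γ} (e : s ≃ t) (h : ∀ x, g (e x) = f x) : f '' s = g '' t := by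
  rw [Set.image_eq_range, Set.image_eq_range, ← EquivLike.range_comp _ e]
  exact congrArg Set.range (funext fun x => (h x).symm)

namespace Network

variable {V A : Type*} {K : ℕ} (N : Network V A K) {u₁ u₂ : V}

theorem ne_root_of_layer_eq (hne : u₁ ≠ u₂) (hlayer : N.layer u₁ = N.layer u₂) :
    u₂ ≠ N.root := by
  rintro rfl
  exact hne (N.root_unique u₁ (hlayer.trans N.root_layer))

theorem ne_terminal_of_layer_eq (hne : u₁ ≠ u₂) (hlayer : N.layer u₁ = N.layer u₂) :
    u₂ ≠ N.terminal := by
  rintro rfl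
  exact hne (N.terminal_unique u₁ (hlayer.trans N.terminal_layer))

end Network

namespace NodeMerge

variable {V A : Type*} [DecidableEq V] {K : ℕ} {tl hd : A → V} {u₁ u₂ : V}

def redirect (u₁ u₂ v : V) : V := if v = u₂ then u₁ else v

theorem redirect_of_ne {v : V} (hv : v ≠ u₂) : redirect u₁ u₂ v = v := if_neg hv

variable (hne : u₁ ≠ u₂) (φ : {a : A // tl a = u₁} ≃ {a : A // tl a = u₂})

def mergeArc (a : A) : {a : A // tl a ≠ u₂} :=
  if h : tl a = u₂ then ⟨φ.symm ⟨a, h⟩, fun h' => hne ((φ.symm ⟨a, h⟩).2.symm.trans h')⟩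
  else ⟨a, h⟩

theorem tl_mergeArc (a : A) : tl (mergeArc hne φ a) = redirect u₁ u₂ (tl a) := by
  unfold mergeArc redirect
  split_ifs with h
  exacts [(φ.symm ⟨a, h⟩).2, rfl]

theorem hd_mergeArc (hφhd : ∀ a, hd (φ a).1 = hd a.1) (a : A) :
    hd (mergeArc hne φ a) = hd a := by
  unfold mergeArc
  split_ifs with h
  · simpa using (hφhd (φ.symm ⟨a, h⟩)).symm
  · rfl

theorem w_mergeArc {w : A → Fin K → ℝ} (hφw : ∀ a, w (φ a).1 = w a.1) (a : A) :
    w (mergeArc hne φ a) = w a := by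
  unfold mergeArc
  split_ifs with h
  · simpa using (hφw (φ.symm ⟨a, h⟩)).symm
  · rfl

theorem eq_of_mergeArc_eq_of_tl_eq {a b : A} (htl : tl a = tl b)
    (h : mergeArc hne φ a = mergeArc hne φ b) : a = b := by
  unfold mergeArc at h
  by_cases ha : tl a = u₂
  · have hb : tl b = u₂ := htl ▸ ha
    rw [dif_pos ha, dif_pos hb, Subtype.mk.injEq, Subtype.val_inj, φ.symm.apply_eq_iff_eq,
      Subtype.mk.injEq] at h
    exact h
  · have hb : tl b ≠ u₂ := htl ▸ ha
    rw [dif_neg ha, dif_neg hb, Subtype.mk.injEq] at h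
    exact h

theorem exists_mergeArc_eq {u : V} (a' : {a : A // tl a ≠ u₂})
    (ha' : tl a'.1 = redirect u₁ u₂ u) : ∃ a, tl a = u ∧ mergeArc hne φ a = a' := by
  by_cases hu : u = u₂
  · rw [redirect, if_pos hu] at ha'
    have hφa : tl (φ ⟨a', ha'⟩).1 = u₂ := (φ ⟨a', ha'⟩).2
    refine ⟨φ ⟨a', ha'⟩, hφa.trans hu.symm, ?_⟩
    simp [mergeArc, hφa]
  · rw [redirect_of_ne hu] at ha'
    exact ⟨a', ha', by simp [mergeArc, a'.2]⟩

variable {hne φ}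

abbrev mergedTl (tl : A → V) (u₂ : V) (a : {a : A // tl a ≠ u₂}) : V := tl a.1

abbrev mergedHd (tl hd : A → V) (u₁ u₂ : V) (a : {a : A // tl a ≠ u₂}) : V :=
  redirect u₁ u₂ (hd a.1)

theorem isPath_map_mergeArc (hφhd : ∀ a, hd (φ a).1 = hd a.1) :
    ∀ {p : List A} {u v : V}, IsPath tl hd p u v → v ≠ u₂ →
      IsPath (mergedTl tl u₂) (mergedHd tl hd u₁ u₂) (p.map (mergeArc hne φ))
        (redirect u₁ u₂ u) v
  | [], u, v, hp, hv => by
    subst hp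
    exact redirect_of_ne hv
  | a :: p, _, _, ⟨rfl, hp⟩, hv =>
    have ih := isPath_map_mergeArc hφhd hp hv
    ⟨tl_mergeArc hne φ a, by simpa [mergedHd, hd_mergeArc hne φ hφhd] using ih⟩

theorem eq_of_map_mergeArc_eq :
    ∀ {p q : List A} {u v v' : V}, IsPath tl hd p u v → IsPath tl hd q u v' →
      p.map (mergeArc hne φ) = q.map (mergeArc hne φ) → p = q
  | [], [], _, _, _, _, _, _ => rfl
  | a :: p, b :: q, _, _, _, ⟨rfl, hp⟩, ⟨hab, hq⟩, h => by
    rw [List.map_cons, List.map_cons, List.cons.injEq] at h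
    obtain rfl := eq_of_mergeArc_eq_of_tl_eq hne φ hab.symm h.1
    rw [eq_of_map_mergeArc_eq hp hq h.2]

theorem exists_isPath_map_mergeArc_eq (hφhd : ∀ a, hd (φ a).1 = hd a.1) :
    ∀ {p' : List {a : A // tl a ≠ u₂}} {u v : V},
      IsPath (mergedTl tl u₂) (mergedHd tl hd u₁ u₂) p' (redirect u₁ u₂ u) v → v ≠ u₁ →
      v ≠ u₂ → ∃ p, IsPath tl hd p u v ∧ p.map (mergeArc hne φ) = p'
  | [], u, v, hp', hv₁, hv₂ => by
    refine ⟨[], ?_, rfl⟩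
    by_cases hu : u = u₂
    · exact absurd (hp'.symm.trans (if_pos hu)) hv₁
    · exact (redirect_of_ne hu).symm.trans hp'
  | a' :: p', u, v, ⟨ha', hp'⟩, hv₁, hv₂ => by
    obtain ⟨a, hta, rfl⟩ := exists_mergeArc_eq hne φ a' ha'
    rw [mergedHd, hd_mergeArc hne φ hφhd] at hp'
    obtain ⟨p, hp, rfl⟩ := exists_isPath_map_mergeArc_eq hφhd hp' hv₁ hv₂
    exact ⟨a :: p, ⟨hta, hp⟩, rfl⟩

theorem pathWeight_map_mergeArc {w : A → Fin K → ℝ} (hφw : ∀ a, w (φ a).1 = w a.1)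
    (p : List A) :
    pathWeight (fun a => w a.1) (p.map (mergeArc hne φ)) = pathWeight w p := by
  simp only [pathWeight, List.map_map]
  exact congrArg List.sum (List.map_congr_left fun a _ => w_mergeArc hne φ hφw a)

variable (hne φ)

noncomputable def pathEquiv (hφhd : ∀ a, hd (φ a).1 = hd a.1) {u v : V} (hu : u ≠ u₂)
    (hv₁ : v ≠ u₁) (hv₂ : v ≠ u₂) :
    {p : List A // IsPath tl hd p u v} ≃
      {p' : List {a : A // tl a ≠ u₂} //
        IsPath (mergedTl tl u₂) (mergedHd tl hd u₁ u₂) p' u v} :=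
  Equiv.ofBijective
    (fun p => ⟨p.1.map (mergeArc hne φ), by
      simpa only [redirect_of_ne hu] using isPath_map_mergeArc hφhd p.2 hv₂⟩)
    ⟨fun p q h => Subtype.ext (eq_of_map_mergeArc_eq p.2 q.2 (congrArg Subtype.val h)),
      fun ⟨p', hp'⟩ => by
        rw [← redirect_of_ne (u₁ := u₁) hu] at hp'
        obtain ⟨p, hp, hpp'⟩ := exists_isPath_map_mergeArc_eq hφhd hp' hv₁ hv₂
        exact ⟨⟨p, hp⟩, Subtype.ext hpp'⟩⟩

theorem pathWeight_pathEquiv_symm (hφhd : ∀ a, hd (φ a).1 = hd a.1) {w : A → Fin K → ℝ}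
    (hφw : ∀ a, w (φ a).1 = w a.1) {u v : V} (hu : u ≠ u₂) (hv₁ : v ≠ u₁) (hv₂ : v ≠ u₂)
    (p' : {p' : List {a : A // tl a ≠ u₂} //
      IsPath (mergedTl tl u₂) (mergedHd tl hd u₁ u₂) p' u v}) :
    pathWeight w ((pathEquiv hne φ hφhd hu hv₁ hv₂).symm p').1 =
      pathWeight (fun a => w a.1) p'.1 := by
  conv_rhs => rw [← (pathEquiv hne φ hφhd hu hv₁ hv₂).apply_symm_apply p']
  exact (pathWeight_map_mergeArc hφw _).symm

end NodeMerge

open NodeMerge in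
theorem node_merge_vpo_general {V A : Type*} [DecidableEq V] {K : ℕ}
    (N : Network V A K) (u₁ u₂ : V) (hne : u₁ ≠ u₂)
    (hlayer : N.layer u₁ = N.layer u₂)
    (φ : {a : A // N.tl a = u₁} ≃ {a : A // N.tl a = u₂})
    (hφhd : ∀ a : {a : A // N.tl a = u₁}, N.hd (φ a).1 = N.hd a.1)
    (hφw : ∀ a : {a : A // N.tl a = u₁}, N.w (φ a).1 = N.w a.1)
    (tl' hd' : {a : A // N.tl a ≠ u₂} → V) (w' : {a : A // N.tl a ≠ u₂} → Fin K → ℝ)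
    (htl' : ∀ a, tl' a = N.tl a.1)
    (hhd' : ∀ a, hd' a = if N.hd a.1 = u₂ then u₁ else N.hd a.1)
    (hw' : ∀ a, w' a = N.w a.1) :
    (∃ e : {p : List {a : A // N.tl a ≠ u₂} // IsPath tl' hd' p N.root N.terminal} ≃
        {p : List A // IsPath N.tl N.hd p N.root N.terminal},
      ∀ p, pathWeight N.w (e p).1 = pathWeight w' p.1) ∧
    ND (pathWeight w' '' {p | IsPath tl' hd' p N.root N.terminal}) = N.Pareto := by
  obtain rfl : tl' = mergedTl N.tl u₂ := funext htl'
  obtain rfl : hd' = mergedHd N.tl N.hd u₁ u₂ := funext hhd'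
  obtain rfl : w' = fun a => N.w a.1 := funext hw'
  have hroot : N.root ≠ u₂ := (N.ne_root_of_layer_eq hne hlayer).symm
  have hterm₁ : N.terminal ≠ u₁ :=
    (N.ne_terminal_of_layer_eq hne.symm hlayer.symm).symm
  have hterm₂ : N.terminal ≠ u₂ := (N.ne_terminal_of_layer_eq hne hlayer).symm
  set e := (pathEquiv hne φ hφhd hroot hterm₁ hterm₂).symm
  have he := pathWeight_pathEquiv_symm hne φ hφhd hφw hroot hterm₁ hterm₂
  refine ⟨⟨e, he⟩, ?_⟩
  rw [Network.Pareto, Network.weights, Network.Paths]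
  exact congrArg ND (Set.image_eq_image_of_equiv e he)

/-- **Node merge is validity-preserving.**  Let `u₁ ≠ u₂` be two nodes in the same layer
whose outgoing arcs are matched by a bijection `φ` preserving heads and weights.  Form the
merged network by deleting the arcs out of `u₂` (keeping the arcs `{a // N.tl a ≠ u₂}`),
redirecting every arc whose head is `u₂` so that its head becomes `u₁`, and deleting `u₂`.
Then there is a weight-preserving bijection between the root–terminal paths of the merged
network and those of `N`; in particular the Pareto frontier is preserved. -/
theorem node_merge_vpo {V A : Type*} [Fintype V] [Fintype A] [DecidableEq V] {K : ℕ}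
    (N : Network V A K) (u₁ u₂ : V) (hne : u₁ ≠ u₂)
    (hlayer : N.layer u₁ = N.layer u₂)
    (φ : {a : A // N.tl a = u₁} ≃ {a : A // N.tl a = u₂})
    (hφhd : ∀ a : {a : A // N.tl a = u₁}, N.hd (φ a).1 = N.hd a.1)
    (hφw : ∀ a : {a : A // N.tl a = u₁}, N.w (φ a).1 = N.w a.1)
    (tl' hd' : {a : A // N.tl a ≠ u₂} → V) (w' : {a : A // N.tl a ≠ u₂} → Fin K → ℝ)
    (htl' : ∀ a, tl' a = N.tl a.1)
    (hhd' : ∀ a, hd' a = if N.hd a.1 = u₂ then u₁ else N.hd a.1)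
    (hw' : ∀ a, w' a = N.w a.1) :
    (∃ e : {p : List {a : A // N.tl a ≠ u₂} // IsPath tl' hd' p N.root N.terminal} ≃
        {p : List A // IsPath N.tl N.hd p N.root N.terminal},
      ∀ p, pathWeight N.w (e p).1 = pathWeight w' p.1) ∧
    ND (pathWeight w' '' {p | IsPath tl' hd' p N.root N.terminal}) = N.Pareto :=
  node_merge_vpo_general N u₁ u₂ hne hlayer φ hφhd hφw tl' hd' w' htl' hhd' hw'
end

section
/- Isolating-pair arc removal: Let N be a network model and let u, v be an isolating pair of nodes in N with layer index of u strictly less than that of v. Let a be an arc of N[u,v]. If ND({w(q) : q a directed path from u to v in N[u,v]}) = ND({w(q) : q a directed path from u to v in N[u,v] not using arc a}), then ND({w(p) : p a directed path from r to t in N}) = ND({w(p) : p a directed path from r to t in N not using arc a}). That is, if the removal of a preserves the Pareto frontier of N[u,v], then it preserves the Pareto frontier of N. -/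
open Pointwise

/-- A node `x` belongs to the sub-network `N[u,v]`: it lies on some directed path
from `u` to `v`, i.e. it is reachable from `u` and `v` is reachable from it. -/
def Network.nodeOnUV {V A : Type*} {K : ℕ} (N : Network V A K) (u v x : V) : Prop :=
  (∃ p, IsPath N.tl N.hd p u x) ∧ (∃ q, IsPath N.tl N.hd q x v)

/-- An arc `a` belongs to the sub-network `N[u,v]`: it lies on some directed path
from `u` to `v`. -/
def Network.arcOnUV {V A : Type*} {K : ℕ} (N : Network V A K) (u v : V) (a : A) : Prop :=
  (∃ p, IsPath N.tl N.hd p u (N.tl a)) ∧ (∃ q, IsPath N.tl N.hd q (N.hd a) v)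

/-- The pair `(u, v)` is isolating in `N`: for every arc `a` of `N` that is not an arc of
`N[u,v]`, (i) if the head of `a` is a node of `N[u,v]` then the head of `a` is `u`, and
(ii) if the tail of `a` is a node of `N[u,v]` then the tail of `a` is `v`. -/
def Network.Isolating {V A : Type*} {K : ℕ} (N : Network V A K) (u v : V) : Prop :=
  ∀ a : A, ¬ N.arcOnUV u v a →
    (N.nodeOnUV u v (N.hd a) → N.hd a = u) ∧ (N.nodeOnUV u v (N.tl a) → N.tl a = v)

/-!
Let `p` be a root–terminal path through `a`. Since `a` lies in `N[u,v]` and no arc of `N` enters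
`N[u,v]` except at `u` or leaves it except at `v`, the path `p` factors as `r ++ m ++ q` with `m`
a `u`–`v` path through `a`. The `u`–`v` path weights form a finite set, so `w(m)` is bounded by
some nondominated weight, and by hypothesis that weight is `w(m')` for a `u`–`v` path `m'`
avoiding `a`. Then `r ++ m' ++ q` avoids `a` (arcs of `r` and `q` lie in other layers than `a`)
and weighs at least `w(p)`. So every root–terminal weight is bounded by one avoiding `a`, which
makes the two nondominated sets equal.
-/

section Pareto

variable {K : ℕ} {S S' : Set (Fin K → ℝ)} {y : Fin K → ℝ}

theorem dominates_iff_lt {y' : Fin K → ℝ} : dominates y' y ↔ y < y' := by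
  rw [lt_iff_le_and_ne, dominates, Pi.le_def, ne_comm]

theorem mem_ND_iff_maximal : y ∈ ND S ↔ Maximal (· ∈ S) y := by
  simp only [ND, Set.mem_ofPred_eq, maximal_iff_forall_gt, dominates_iff_lt, not_exists, not_and]
  exact and_congr_right fun _ => forall_congr' fun _ => imp_not_comm

theorem exists_mem_ND_le (hS : S.Finite) (hy : y ∈ S) : ∃ z ∈ ND S, y ≤ z := by
  obtain ⟨z, hyz, hz⟩ := hS.exists_le_maximal hy
  exact ⟨z, mem_ND_iff_maximal.mpr hz, hyz⟩

theorem exists_mem_le_of_ND_eq (hS : S.Finite) (h : ND S = ND S') (hy : y ∈ S) :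
    ∃ z ∈ S', y ≤ z := by
  obtain ⟨z, hz, hyz⟩ := exists_mem_ND_le hS hy
  exact ⟨z, (h ▸ hz).1, hyz⟩

theorem ND_eq_of_subset_of_forall_le (hsub : S' ⊆ S) (hle : ∀ y ∈ S, ∃ z ∈ S', y ≤ z) :
    ND S = ND S' := by
  ext y
  simp only [mem_ND_iff_maximal]
  constructor
  · intro hy
    obtain ⟨z, hz, hyz⟩ := hle y hy.prop
    rw [← hy.eq_of_le (hsub hz) hyz] at hz
    exact hy.mono hsub hz
  · intro hy
    refine ⟨hsub hy.prop, fun z hz hyz => ?_⟩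
    obtain ⟨z', hz', hzz'⟩ := hle z hz
    exact hzz'.trans (hy.le_of_ge hz' (hyz.trans hzz'))

end Pareto

namespace IsPath

variable {V A : Type*} {tl hd : A → V}

theorem append_iff {p q : List A} {x z : V} :
    IsPath tl hd (p ++ q) x z ↔ ∃ y, IsPath tl hd p x y ∧ IsPath tl hd q y z := by
  induction p generalizing x with
  | nil => simp [IsPath]
  | cons b p ih => simp [IsPath, ih, and_assoc]

theorem append {p q : List A} {x y z : V} (hp : IsPath tl hd p x y) (hq : IsPath tl hd q y z) :
    IsPath tl hd (p ++ q) x z :=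
  append_iff.mpr ⟨y, hp, hq⟩

theorem concat_iff {p : List A} {b : A} {x z : V} :
    IsPath tl hd (p ++ [b]) x z ↔ IsPath tl hd p x (tl b) ∧ hd b = z := by
  simp [append_iff, IsPath]

theorem exists_eq_append_cons_of_mem {p : List A} {b : A} {x z : V} (h : IsPath tl hd p x z)
    (hb : b ∈ p) :
    ∃ p₁ p₂, p = p₁ ++ b :: p₂ ∧ IsPath tl hd p₁ x (tl b) ∧ IsPath tl hd p₂ (hd b) z := by
  obtain ⟨p₁, p₂, rfl⟩ := List.append_of_mem hb
  obtain ⟨y, hp₁, rfl, hp₂⟩ := append_iff.mp h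
  exact ⟨p₁, p₂, rfl, hp₁, hp₂⟩

end IsPath

namespace Network

variable {V A : Type*} {K : ℕ} (N : Network V A K)

theorem layer_eq_add_length {p : List A} {x y : V} (h : IsPath N.tl N.hd p x y) :
    N.layer y = N.layer x + p.length := by
  induction p generalizing x with
  | nil => cases h; rfl
  | cons b p ih =>
    obtain ⟨rfl, h⟩ := h
    rw [ih h, N.arc_step, List.length_cons]
    ring

theorem eq_of_isPath_of_layer_le {p : List A} {x y : V} (h : IsPath N.tl N.hd p x y)
    (hl : N.layer y ≤ N.layer x) : x = y := by
  obtain rfl : p = [] := List.length_eq_zero_iff.mp (by have := N.layer_eq_add_length h; omega)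
  exact h

theorem layer_le_of_mem_isPath {p : List A} {b : A} {x z : V} (h : IsPath N.tl N.hd p x z)
    (hb : b ∈ p) : N.layer x ≤ N.layer (N.tl b) ∧ N.layer (N.hd b) ≤ N.layer z := by
  obtain ⟨p₁, p₂, rfl, h₁, h₂⟩ := h.exists_eq_append_cons_of_mem hb
  have := N.layer_eq_add_length h₁
  have := N.layer_eq_add_length h₂
  omega

theorem finite_paths [Finite A] (x y : V) : {p : List A | IsPath N.tl N.hd p x y}.Finite := by
  refine (List.finite_length_le A (N.n + 1)).subset fun p hp => ?_
  have := N.layer_eq_add_length hp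
  have := N.layer_pos x
  have := N.layer_le y
  exact (show p.length ≤ N.n + 1 by omega)

variable {N} {u v : V} {b : A}

theorem arcOnUV.nodeOnUV_tl (hb : N.arcOnUV u v b) : N.nodeOnUV u v (N.tl b) :=
  let ⟨q, hq⟩ := hb.2
  ⟨hb.1, b :: q, rfl, hq⟩

theorem arcOnUV.nodeOnUV_hd (hb : N.arcOnUV u v b) : N.nodeOnUV u v (N.hd b) :=
  let ⟨p, hp⟩ := hb.1
  ⟨⟨p ++ [b], IsPath.concat_iff.mpr ⟨hp, rfl⟩⟩, hb.2⟩

theorem arcOnUV.not_mem_of_isPath_to {p : List A} {x : V} (hb : N.arcOnUV u v b)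
    (hp : IsPath N.tl N.hd p x u) : b ∉ p := fun hmem => by
  have := (N.layer_le_of_mem_isPath hp hmem).2
  have := N.layer_eq_add_length hb.1.choose_spec
  have := N.arc_step b
  omega

theorem arcOnUV.not_mem_of_isPath_from {p : List A} {y : V} (hb : N.arcOnUV u v b)
    (hp : IsPath N.tl N.hd p v y) : b ∉ p := fun hmem => by
  have := (N.layer_le_of_mem_isPath hp hmem).1
  have := N.layer_eq_add_length hb.2.choose_spec
  have := N.arc_step b
  omega

namespace Isolating

variable (hiso : N.Isolating u v)
include hiso

theorem arcOnUV_of_nodeOnUV_tl (hb : N.nodeOnUV u v (N.tl b)) (hbv : N.tl b ≠ v) :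
    N.arcOnUV u v b :=
  by_contra fun hnb => hbv ((hiso b hnb).2 hb)

theorem arcOnUV_of_nodeOnUV_hd (hb : N.nodeOnUV u v (N.hd b)) (hbu : N.hd b ≠ u) :
    N.arcOnUV u v b :=
  by_contra fun hnb => hbu ((hiso b hnb).1 hb)

theorem exists_split_to_terminal {q : List A} {x : V} (hq : IsPath N.tl N.hd q x N.terminal)
    (hx : N.nodeOnUV u v x) :
    ∃ q₁ q₂, q = q₁ ++ q₂ ∧ IsPath N.tl N.hd q₁ x v ∧ IsPath N.tl N.hd q₂ v N.terminal := by
  induction q generalizing x with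
  | nil =>
    cases hq
    obtain ⟨-, q, hq⟩ := hx
    have hv := N.eq_of_isPath_of_layer_le hq (N.terminal_layer ▸ N.layer_le v)
    exact ⟨[], [], rfl, hv, hv ▸ rfl⟩
  | cons b q ih =>
    by_cases hxv : x = v
    · exact ⟨[], b :: q, rfl, hxv, hxv ▸ hq⟩
    obtain ⟨rfl, hq⟩ := hq
    have hb := hiso.arcOnUV_of_nodeOnUV_tl hx hxv
    obtain ⟨q₁, q₂, rfl, hq₁, hq₂⟩ := ih hq hb.nodeOnUV_hd
    exact ⟨b :: q₁, q₂, rfl, ⟨rfl, hq₁⟩, hq₂⟩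

theorem exists_split_from_root {p : List A} {y : V} (hp : IsPath N.tl N.hd p N.root y)
    (hy : N.nodeOnUV u v y) :
    ∃ p₁ p₂, p = p₁ ++ p₂ ∧ IsPath N.tl N.hd p₁ N.root u ∧ IsPath N.tl N.hd p₂ u y := by
  induction p using List.reverseRecOn generalizing y with
  | nil =>
    cases hp
    obtain ⟨⟨p, hp⟩, -⟩ := hy
    have hu := N.eq_of_isPath_of_layer_le hp (N.root_layer ▸ N.layer_pos u)
    exact ⟨[], [], rfl, hu.symm, hu⟩
  | append_singleton p b ih =>
    obtain ⟨hpb, rfl⟩ := IsPath.concat_iff.mp hp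
    by_cases hbu : N.hd b = u
    · exact ⟨p ++ [b], [], by simp, hbu ▸ hp, hbu.symm⟩
    have hb := hiso.arcOnUV_of_nodeOnUV_hd hy hbu
    obtain ⟨p₁, p₂, rfl, hp₁, hp₂⟩ := ih hpb hb.nodeOnUV_tl
    exact ⟨p₁, p₂ ++ [b], by simp, hp₁, IsPath.concat_iff.mpr ⟨hp₂, rfl⟩⟩

theorem exists_split_of_mem {p : List A} (hp : IsPath N.tl N.hd p N.root N.terminal)
    (hb : N.arcOnUV u v b) (hbp : b ∈ p) :
    ∃ r m q, p = r ++ m ++ q ∧ IsPath N.tl N.hd r N.root u ∧ IsPath N.tl N.hd m u v ∧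
      IsPath N.tl N.hd q v N.terminal := by
  obtain ⟨p₁, p₂, rfl, hp₁, hp₂⟩ := hp.exists_eq_append_cons_of_mem hbp
  obtain ⟨r, m₁, rfl, hr, hm₁⟩ := hiso.exists_split_from_root hp₁ hb.nodeOnUV_tl
  obtain ⟨m₂, q, rfl, hm₂, hq⟩ := hiso.exists_split_to_terminal hp₂ hb.nodeOnUV_hd
  exact ⟨r, m₁ ++ b :: m₂, q, by simp, hr, hm₁.append ⟨rfl, hm₂⟩, hq⟩

end Isolating

end Network

section Weight

variable {A : Type*} {K : ℕ} (w : A → Fin K → ℝ)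

theorem pathWeight_append (p q : List A) :
    pathWeight w (p ++ q) = pathWeight w p + pathWeight w q := by
  simp [pathWeight]

theorem pathWeight_append_append_le {r m m' q : List A} (h : pathWeight w m ≤ pathWeight w m') :
    pathWeight w (r ++ m ++ q) ≤ pathWeight w (r ++ m' ++ q) := by
  simp only [pathWeight_append]
  gcongr

end Weight

theorem isolating_arc_removal_vpo_general {V A : Type*} [Fintype A] {K : ℕ}
    (N : Network V A K) (u v : V)
    (hiso : N.Isolating u v) (a : A) (ha : N.arcOnUV u v a)
    (hsub : ND (pathWeight N.w '' {q | IsPath N.tl N.hd q u v}) =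
      ND (pathWeight N.w '' {q | IsPath N.tl N.hd q u v ∧ a ∉ q})) :
    ND (pathWeight N.w '' {p | IsPath N.tl N.hd p N.root N.terminal}) =
      ND (pathWeight N.w '' {p | IsPath N.tl N.hd p N.root N.terminal ∧ a ∉ p}) := by
  refine ND_eq_of_subset_of_forall_le (Set.image_mono fun p hp => hp.1) ?_
  rintro _ ⟨p, hp, rfl⟩
  by_cases hap : a ∉ p
  · exact ⟨_, ⟨p, ⟨hp, hap⟩, rfl⟩, le_rfl⟩
  obtain ⟨r, m, q, rfl, hr, hm, hq⟩ := hiso.exists_split_of_mem hp ha (not_not.mp hap)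
  obtain ⟨_, ⟨m', ⟨hm', ham'⟩, rfl⟩, hle⟩ :=
    exists_mem_le_of_ND_eq ((N.finite_paths u v).image _) hsub ⟨m, hm, rfl⟩
  refine ⟨_, ⟨r ++ m' ++ q, ⟨(hr.append hm').append hq, ?_⟩, rfl⟩,
    pathWeight_append_append_le N.w hle⟩
  simp only [List.mem_append, not_or]
  exact ⟨⟨ha.not_mem_of_isPath_to hr, ham'⟩, ha.not_mem_of_isPath_from hq⟩

/-- **Isolating-pair arc removal.**  If `(u, v)` is an isolating pair of nodes of `N`
(with the layer of `u` below that of `v`) and `a` is an arc of `N[u,v]` whose removal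
preserves the nondominated set of the `u`–`v` path weights, then removing `a` also
preserves the Pareto frontier of `N`. -/
theorem isolating_arc_removal_vpo {V A : Type*} [Fintype V] [Fintype A] {K : ℕ}
    (N : Network V A K) (u v : V) (hlt : N.layer u < N.layer v)
    (hiso : N.Isolating u v) (a : A) (ha : N.arcOnUV u v a)
    (hsub : ND (pathWeight N.w '' {q | IsPath N.tl N.hd q u v}) =
      ND (pathWeight N.w '' {q | IsPath N.tl N.hd q u v ∧ a ∉ q})) :
    ND (pathWeight N.w '' {p | IsPath N.tl N.hd p N.root N.terminal}) =
      ND (pathWeight N.w '' {p | IsPath N.tl N.hd p N.root N.terminal ∧ a ∉ p}) :=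
  isolating_arc_removal_vpo_general N u v hiso a ha hsub
end
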